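/- Let A = B = I₃ (the 3×3 identity), K₁ = [[1,0,−10],[−1,1,0],[0,0,1]] and K₂ = [[1,−10,0],[0,1,0],[−1,0,1]]. Then every eigenvalue of A−BK₁ and of A−BK₂ equals 0 (in particular both matrices have spectral radius strictly less than 1), yet the matrix A−B(K₁+K₂)/2 has an eigenvalue of absolute value strictly greater than 1. Consequently the set of gains K ∈ ℝ^{3×3} for which A−BK has spectral radius less than 1 is not convex. -/

import Mathlib

open Matrix

noncomputable section

/-- Spectral radius of a real square matrix: the supremum of the absolute values of its
complex eigenvalues. -/
def specRad {d : ℕ} (M : Matrix (Fin d) (Fin d) ℝ) : ℝ :=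
  ⨆ μ : spectrum ℂ (M.map (algebraMap ℝ ℂ)), ‖(μ : ℂ)‖

/-- Minimum singular value of a real matrix. -/
def sigmaMin {m n : ℕ} (M : Matrix (Fin m) (Fin n) ℝ) : ℝ :=
  Real.sqrt (⨅ i, (show (Mᵀ * M).IsHermitian by
    rw [← conjTranspose_eq_transpose_of_trivial]; exact isHermitian_conjTranspose_mul_self M).eigenvalues i)

/-- Spectral norm (maximum singular value) of a real matrix. -/
def specNorm {m n : ℕ} (M : Matrix (Fin m) (Fin n) ℝ) : ℝ :=
  Real.sqrt (⨆ i, (show (Mᵀ * M).IsHermitian by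
    rw [← conjTranspose_eq_transpose_of_trivial]; exact isHermitian_conjTranspose_mul_self M).eigenvalues i)

/-- Frobenius norm of a real matrix. -/
def frobNorm {m n : ℕ} (M : Matrix (Fin m) (Fin n) ℝ) : ℝ :=
  Real.sqrt (∑ i, ∑ j, (M i j) ^ 2)

/-- For a stabilizing gain `K`, the unique positive semidefinite solution `P_K` of
`P = Q + Kᵀ R K + (A - B K)ᵀ P (A - B K)`, given by its convergent series representation. -/
def Pmat {d k : ℕ} (A : Matrix (Fin d) (Fin d) ℝ) (B : Matrix (Fin d) (Fin k) ℝ)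
    (Q : Matrix (Fin d) (Fin d) ℝ) (R : Matrix (Fin k) (Fin k) ℝ)
    (K : Matrix (Fin k) (Fin d) ℝ) : Matrix (Fin d) (Fin d) ℝ :=
  ∑' t : ℕ, ((A - B * K)ᵀ) ^ t * (Q + Kᵀ * R * K) * (A - B * K) ^ t

/-- The state correlation matrix `Σ_K = ∑_{t} (A-BK)^t Σ₀ ((A-BK)ᵀ)^t`. -/
def SigmaMat {d k : ℕ} (A : Matrix (Fin d) (Fin d) ℝ) (B : Matrix (Fin d) (Fin k) ℝ)
    (Sig0 : Matrix (Fin d) (Fin d) ℝ) (K : Matrix (Fin k) (Fin d) ℝ) :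
    Matrix (Fin d) (Fin d) ℝ :=
  ∑' t : ℕ, (A - B * K) ^ t * Sig0 * ((A - B * K)ᵀ) ^ t

/-- The LQR cost `C(K) = Tr(Σ₀ P_K)`. -/
def Cost {d k : ℕ} (A : Matrix (Fin d) (Fin d) ℝ) (B : Matrix (Fin d) (Fin k) ℝ)
    (Q : Matrix (Fin d) (Fin d) ℝ) (R : Matrix (Fin k) (Fin k) ℝ)
    (Sig0 : Matrix (Fin d) (Fin d) ℝ) (K : Matrix (Fin k) (Fin d) ℝ) : ℝ :=
  (Sig0 * Pmat A B Q R K).trace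

/-- `E_K = (R + Bᵀ P_K B) K - Bᵀ P_K A`. -/
def Emat {d k : ℕ} (A : Matrix (Fin d) (Fin d) ℝ) (B : Matrix (Fin d) (Fin k) ℝ)
    (Q : Matrix (Fin d) (Fin d) ℝ) (R : Matrix (Fin k) (Fin k) ℝ)
    (K : Matrix (Fin k) (Fin d) ℝ) : Matrix (Fin k) (Fin d) ℝ :=
  (R + Bᵀ * Pmat A B Q R K * B) * K - Bᵀ * Pmat A B Q R K * A

section Aux

lemma spec_iff_det {n : ℕ} {M : Matrix (Fin n) (Fin n) ℂ} {μ : ℂ} :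
    μ ∈ spectrum ℂ M ↔ (μ • (1 : Matrix (Fin n) (Fin n) ℂ) - M).det = 0 := by
  rw [spectrum.mem_iff, Algebra.algebraMap_eq_smul_one, Matrix.isUnit_iff_isUnit_det,
    isUnit_iff_ne_zero, not_not]

lemma det_aux1 (μ : ℂ) :
    (μ • (1 : Matrix (Fin 3) (Fin 3) ℂ) -
      (((1 : Matrix (Fin 3) (Fin 3) ℝ) - 1 * !![(1:ℝ), 0, -10; -1, 1, 0; 0, 0, 1]).map
        (algebraMap ℝ ℂ))).det = μ ^ 3 := by
  simp [Matrix.det_fin_three, Matrix.smul_apply, Matrix.one_apply, Matrix.sub_apply,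
    Matrix.map_apply]
  ring

lemma det_aux2 (μ : ℂ) :
    (μ • (1 : Matrix (Fin 3) (Fin 3) ℂ) -
      (((1 : Matrix (Fin 3) (Fin 3) ℝ) - 1 * !![(1:ℝ), -10, 0; 0, 1, 0; -1, 0, 1]).map
        (algebraMap ℝ ℂ))).det = μ ^ 3 := by
  simp [Matrix.det_fin_three, Matrix.smul_apply, Matrix.one_apply, Matrix.sub_apply,
    Matrix.map_apply]
  ring

lemma det_aux3 (μ : ℂ) :
    (μ • (1 : Matrix (Fin 3) (Fin 3) ℂ) -
      (((1 : Matrix (Fin 3) (Fin 3) ℝ) - 1 * ((1/2 : ℝ) •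
        (!![(1:ℝ), 0, -10; -1, 1, 0; 0, 0, 1] + !![(1:ℝ), -10, 0; 0, 1, 0; -1, 0, 1]))).map
        (algebraMap ℝ ℂ))).det = μ ^ 3 - 5 * μ := by
  simp [Matrix.det_fin_three, Matrix.smul_apply, Matrix.one_apply, Matrix.sub_apply,
    Matrix.map_apply, Matrix.add_apply, Matrix.vecHead, Matrix.vecTail]
  ring

end Aux


theorem nonconvexity_of_stabilizing_gains
    (A B K₁ K₂ : Matrix (Fin 3) (Fin 3) ℝ)
    (hA : A = 1) (hB : B = 1)
    (hK₁ : K₁ = !![(1:ℝ), 0, -10; -1, 1, 0; 0, 0, 1])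
    (hK₂ : K₂ = !![(1:ℝ), -10, 0; 0, 1, 0; -1, 0, 1]) :
    (∀ μ ∈ spectrum ℂ ((A - B * K₁).map (algebraMap ℝ ℂ)), μ = 0) ∧
    (∀ μ ∈ spectrum ℂ ((A - B * K₂).map (algebraMap ℝ ℂ)), μ = 0) ∧
    specRad (A - B * K₁) < 1 ∧ specRad (A - B * K₂) < 1 ∧
    (∃ μ ∈ spectrum ℂ ((A - B * ((1 / 2 : ℝ) • (K₁ + K₂))).map (algebraMap ℝ ℂ)),
      1 < ‖μ‖) ∧
    ¬ Convex ℝ {K : Matrix (Fin 3) (Fin 3) ℝ | specRad (A - B * K) < 1} := by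
  subst hA hB hK₁ hK₂
  set M₁ := ((1 : Matrix (Fin 3) (Fin 3) ℝ) - 1 * !![(1:ℝ), 0, -10; -1, 1, 0; 0, 0, 1])
    with hM₁
  set M₂ := ((1 : Matrix (Fin 3) (Fin 3) ℝ) - 1 * !![(1:ℝ), -10, 0; 0, 1, 0; -1, 0, 1])
    with hM₂
  set Mm := ((1 : Matrix (Fin 3) (Fin 3) ℝ) - 1 * ((1/2 : ℝ) •
    (!![(1:ℝ), 0, -10; -1, 1, 0; 0, 0, 1] + !![(1:ℝ), -10, 0; 0, 1, 0; -1, 0, 1]))) with hMm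
  -- Part 1 : spectrum of M₁ is {0}
  have h1 : ∀ μ ∈ spectrum ℂ (M₁.map (algebraMap ℝ ℂ)), μ = 0 := by
    intro μ hμ
    have := spec_iff_det.mp hμ
    rw [det_aux1] at this
    exact pow_eq_zero_iff (n := 3) (by norm_num) |>.mp this
  have h2 : ∀ μ ∈ spectrum ℂ (M₂.map (algebraMap ℝ ℂ)), μ = 0 := by
    intro μ hμ
    have := spec_iff_det.mp hμ
    rw [det_aux2] at this
    exact pow_eq_zero_iff (n := 3) (by norm_num) |>.mp this
  -- membership of 0
  have h0m1 : (0 : ℂ) ∈ spectrum ℂ (M₁.map (algebraMap ℝ ℂ)) :=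
    spec_iff_det.mpr (by rw [det_aux1]; norm_num)
  have h0m2 : (0 : ℂ) ∈ spectrum ℂ (M₂.map (algebraMap ℝ ℂ)) :=
    spec_iff_det.mpr (by rw [det_aux2]; norm_num)
  -- spectral radii
  have hr1 : specRad M₁ = 0 := by
    haveI : Nonempty (spectrum ℂ (M₁.map (algebraMap ℝ ℂ))) := ⟨⟨0, h0m1⟩⟩
    unfold specRad
    rw [show (fun μ : spectrum ℂ (M₁.map (algebraMap ℝ ℂ)) => ‖(μ : ℂ)‖) =
      fun _ => (0 : ℝ) from funext fun μ => by rw [h1 μ μ.2]; simp, ciSup_const]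
  have hr2 : specRad M₂ = 0 := by
    haveI : Nonempty (spectrum ℂ (M₂.map (algebraMap ℝ ℂ))) := ⟨⟨0, h0m2⟩⟩
    unfold specRad
    rw [show (fun μ : spectrum ℂ (M₂.map (algebraMap ℝ ℂ)) => ‖(μ : ℂ)‖) =
      fun _ => (0 : ℝ) from funext fun μ => by rw [h2 μ μ.2]; simp, ciSup_const]
  -- the bad eigenvalue √5
  set c : ℂ := ((Real.sqrt 5 : ℝ) : ℂ) with hc
  have hc2 : c ^ 2 = 5 := by
    rw [hc]
    norm_cast
    rw [Real.sq_sqrt (by norm_num)]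
  have hmemc : c ∈ spectrum ℂ (Mm.map (algebraMap ℝ ℂ)) := by
    refine spec_iff_det.mpr ?_
    rw [det_aux3, show c ^ 3 - 5 * c = c * (c ^ 2 - 5) by ring, hc2]
    ring
  have habs : ‖c‖ = Real.sqrt 5 := by
    rw [hc, Complex.norm_real, Real.norm_eq_abs, abs_of_nonneg (Real.sqrt_nonneg _)]
  have h15 : 1 < Real.sqrt 5 := by
    rw [show (1 : ℝ) = Real.sqrt 1 from (Real.sqrt_one).symm]
    exact Real.sqrt_lt_sqrt (by norm_num) (by norm_num)
  -- bounded spectrum of the midpoint matrix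
  have hsub : spectrum ℂ (Mm.map (algebraMap ℝ ℂ)) ⊆ {0, c, -c} := by
    intro μ hμ
    have hd := spec_iff_det.mp hμ
    rw [det_aux3] at hd
    have : μ * (μ - c) * (μ + c) = 0 := by
      have hcc : c ^ 2 = 5 := hc2
      linear_combination hd - μ * hcc
    simp only [Set.mem_insert_iff, Set.mem_singleton_iff]
    rcases mul_eq_zero.mp this with h | h
    · rcases mul_eq_zero.mp h with h | h
      · exact Or.inl h
      · exact Or.inr (Or.inl (by linear_combination h))
    · exact Or.inr (Or.inr (by linear_combination h))
  have hfin : (spectrum ℂ (Mm.map (algebraMap ℝ ℂ))).Finite :=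
    Set.Finite.subset (((Set.finite_singleton (-c)).insert c).insert 0) hsub
  have hbig : 1 < specRad Mm := by
    haveI : Finite (spectrum ℂ (Mm.map (algebraMap ℝ ℂ))) := hfin.to_subtype
    have hbdd : BddAbove (Set.range fun μ : spectrum ℂ (Mm.map (algebraMap ℝ ℂ)) =>
        ‖(μ : ℂ)‖) := (Set.finite_range _).bddAbove
    have hle : ‖c‖ ≤ specRad Mm := le_ciSup hbdd ⟨c, hmemc⟩
    rw [habs] at hle
    linarith
  refine ⟨h1, h2, by rw [hr1]; norm_num, by rw [hr2]; norm_num, ⟨c, hmemc, by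
    rw [habs]; exact h15⟩, ?_⟩
  intro hconv
  have hmem1 : !![(1:ℝ), 0, -10; -1, 1, 0; 0, 0, 1] ∈
      {K : Matrix (Fin 3) (Fin 3) ℝ | specRad (1 - 1 * K) < 1} := by
    rw [Set.mem_setOf_eq, ← hM₁, hr1]; norm_num
  have hmem2 : !![(1:ℝ), -10, 0; 0, 1, 0; -1, 0, 1] ∈
      {K : Matrix (Fin 3) (Fin 3) ℝ | specRad (1 - 1 * K) < 1} := by
    rw [Set.mem_setOf_eq, ← hM₂, hr2]; norm_num
  have hmid := hconv hmem1 hmem2 (by norm_num : (0:ℝ) ≤ 1/2) (by norm_num : (0:ℝ) ≤ 1/2)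
    (by norm_num)
  rw [Set.mem_setOf_eq, ← smul_add, ← hMm] at hmid
  linarith
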